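/- Let G be a digraph with SCC partition 𝒮 and a labeling π: 𝒮 → ℕ such that the intervals [π(S), π(S)+|S|-1] partition [1,n] and paths between distinct SCCs respect π (π increases along condensation edges). If deleting an edge splits an SCC S into SCCs S₁,...,S_k (topologically sorted within the new condensation restricted to {S₁,...,S_k}), and we assign π(S₁) := π(S) and π(S_i) := π(S_{i-1}) + |S_{i-1}| for i ≥ 2, then the new labeling again satisfies: the intervals [π(S_i), π(S_i)+|S_i|-1] partition [π(S), π(S)+|S|-1], all new intervals together partition [1,n], and π increases along every edge of the new condensation. -/

import Mathlib

/-!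
The fragment `S_i` receives the block of `|S_i|` labels starting at
`π(S) + |S_1| + ⋯ + |S_{i-1}|`; since the `|S_i|` add up to `|S|`, these blocks tile the old
interval of `S`. Hence every new interval lies inside the old interval of its vertex, and
disjointness and the cover of `[1, n]` are inherited from the old labeling. A new path between
distinct new SCCs either joins distinct old SCCs, whose disjoint old intervals are ordered by `π`
and contain the new labels, or stays inside `S`, where the topological order of the fragments is
the order of their blocks.
-/

/-- Two vertices are strongly connected: each reaches the other. -/
def SConn {V : Type*} (E : V → V → Prop) (u v : V) : Prop :=
  Relation.ReflTransGen E u v ∧ Relation.ReflTransGen E v u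

section

open Finset

theorem eq_add_sum_range_of_succ_eq {M : Type*} [AddCommMonoid M] {u c : ℕ → M} {k : ℕ}
    (h : ∀ i, i + 1 < k → u (i + 1) = u i + c i) : ∀ i < k, u i = u 0 + ∑ j ∈ range i, c j := by
  intro i hi
  induction i with
  | zero => simp
  | succ i ih => rw [h i hi, ih (by omega), sum_range_succ, add_assoc]

theorem Finset.biUnion_range_Ico_of_monotone {α : Type*} [LinearOrder α] [LocallyFiniteOrder α]
    {b : ℕ → α} (hb : Monotone b) (k : ℕ) :
    (range k).biUnion (fun i => Ico (b i) (b (i + 1))) = Ico (b 0) (b k) := by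
  induction k with
  | zero => simp
  | succ k ih =>
    rw [range_add_one, biUnion_insert, ih, union_comm,
      Ico_union_Ico_eq_Ico (hb k.zero_le) (hb k.le_succ)]

theorem Monotone.disjoint_Ico_succ {α : Type*} [LinearOrder α] [LocallyFiniteOrder α]
    {b : ℕ → α} (hb : Monotone b) {i j : ℕ} (hij : i ≠ j) :
    Disjoint (Ico (b i) (b (i + 1))) (Ico (b j) (b (j + 1))) := by
  rw [← disjoint_coe, coe_Ico, coe_Ico]
  simpa using hb.pairwise_disjoint_on_Ico_succ hij

theorem Finset.lt_of_mem_Ico_of_disjoint {α : Type*} [LinearOrder α] [LocallyFiniteOrder α]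
    {a a' b b' m : α} (h : Disjoint (Ico a a') (Ico b b')) (hab : a < b) (hb : b < b')
    (hm : m ∈ Ico a a') : m < b := by
  by_contra! hbm
  rw [mem_Ico] at hm
  exact disjoint_left.1 h (mem_Ico.2 ⟨hab.le, hbm.trans_lt hm.2⟩) (left_mem_Ico.2 hb)

namespace SConn

variable {V : Type*} {E : V → V → Prop} {u v w : V}

theorem refl (E : V → V → Prop) (v : V) : SConn E v v := ⟨.refl, .refl⟩

theorem symm (h : SConn E u v) : SConn E v u := ⟨h.2, h.1⟩

theorem trans (h : SConn E u v) (h' : SConn E v w) : SConn E u w :=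
  ⟨h.1.trans h'.1, h'.2.trans h.2⟩

theorem comm : SConn E u v ↔ SConn E v u := ⟨symm, symm⟩

theorem setOf_eq (h : SConn E u v) : {w | SConn E u w} = {w | SConn E v w} :=
  Set.ext fun _ => ⟨h.symm.trans, h.trans⟩

theorem card_setOf_pos [Finite V] (E : V → V → Prop) (v : V) : 0 < Nat.card {w | SConn E v w} :=
  Nat.card_pos_iff.2 ⟨⟨v, refl E v⟩, Set.toFinite _⟩

end SConn

variable {V : Type*} {E E' : V → V → Prop} {π π' : V → ℕ} {n : ℕ} {s0 : V} {k : ℕ} {r : ℕ → V}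

/-- Half-open, so that no truncated `- 1` occurs; see `Icc_eq_labelInterval`. -/
noncomputable def labelInterval (E : V → V → Prop) (π : V → ℕ) (v : V) : Finset ℕ :=
  Ico (π v) (π v + Nat.card {w | SConn E v w})

theorem Icc_eq_labelInterval [Finite V] (E : V → V → Prop) (π : V → ℕ) (v : V) :
    Icc (π v) (π v + Nat.card {w | SConn E v w} - 1) = labelInterval E π v := by
  have := SConn.card_setOf_pos E v
  ext m
  simp only [labelInterval, mem_Icc, mem_Ico]
  omega

theorem self_mem_labelInterval [Finite V] (E : V → V → Prop) (π : V → ℕ) (v : V) :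
    π v ∈ labelInterval E π v :=
  left_mem_Ico.2 (Nat.lt_add_of_pos_right (SConn.card_setOf_pos E v))

theorem labelInterval_congr (hconst : ∀ x y, SConn E x y → π x = π y) {u v : V}
    (h : SConn E u v) : labelInterval E π u = labelInterval E π v := by
  rw [labelInterval, labelInterval, hconst u v h, h.setOf_eq]

structure IsTopologicalLabeling [Fintype V] (E : V → V → Prop) (π : V → ℕ) (n : ℕ) : Prop where
  const : ∀ x y, SConn E x y → π x = π y
  lt_of_reach : ∀ x y, ¬ SConn E x y → Relation.ReflTransGen E x y → π x < π y
  disjoint : ∀ x y, ¬ SConn E x y → Disjoint (labelInterval E π x) (labelInterval E π y)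
  biUnion_eq : univ.biUnion (labelInterval E π) = Icc 1 n

/-- Passing from `E` to `E' ≤ E` splits the SCC `S` of `s0` into the `E'`-SCCs of
`r 0, …, r (k-1)`, in topological order, and leaves every other SCC intact. -/
structure IsSCCSplit (E E' : V → V → Prop) (s0 : V) (k : ℕ) (r : ℕ → V) : Prop where
  le : E' ≤ E
  sconn_iff : ∀ v, SConn E v s0 ↔ ∃ i < k, SConn E' v (r i)
  not_sconn : ∀ i < k, ∀ j < k, i ≠ j → ¬ SConn E' (r i) (r j)
  not_reach : ∀ i < k, ∀ j < k, i < j → ¬ Relation.ReflTransGen E' (r j) (r i)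
  sconn_iff_of_not_sconn : ∀ v w, ¬ SConn E v s0 → (SConn E v w ↔ SConn E' v w)

theorem relabel_eq_add_sum (hfirst : π' (r 0) = π s0)
    (hrec : ∀ i, i + 1 < k → π' (r (i + 1)) = π' (r i) + Nat.card {w | SConn E' (r i) w})
    {i : ℕ} (hi : i < k) :
    π' (r i) = π s0 + ∑ j ∈ range i, Nat.card {w | SConn E' (r j) w} := by
  rw [eq_add_sum_range_of_succ_eq (u := fun i => π' (r i)) hrec i hi, hfirst]

theorem relabel_lt [Finite V]
    (hrec : ∀ i, i + 1 < k → π' (r (i + 1)) = π' (r i) + Nat.card {w | SConn E' (r i) w})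
    {i j : ℕ} (hij : i < j) (hj : j < k) : π' (r i) < π' (r j) := by
  rw [eq_add_sum_range_of_succ_eq (u := fun i => π' (r i)) hrec i (hij.trans hj),
    eq_add_sum_range_of_succ_eq (u := fun i => π' (r i)) hrec j hj]
  exact Nat.add_lt_add_left (sum_lt_sum_of_subset (range_subset_range.2 hij.le)
    (mem_range.2 hij) (by simp) (SConn.card_setOf_pos _ _) fun _ _ _ => Nat.zero_le _) _

namespace IsSCCSplit

theorem card_setOf_sconn_eq_sum [Fintype V] (hs : IsSCCSplit E E' s0 k r) :
    Nat.card {w | SConn E s0 w} = ∑ i ∈ range k, Nat.card {w | SConn E' (r i) w} := by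
  classical
  simp only [Nat.card_eq_card_toFinset, Set.toFinset_ofPred]
  rw [← card_biUnion]
  · congr 1
    ext w
    simp only [mem_filter, mem_univ, true_and, mem_biUnion, mem_range]
    rw [SConn.comm, hs.sconn_iff]
    simp only [SConn.comm]
  · intro i hi j hj hij
    simp only [coe_range, Set.mem_Iio] at hi hj
    exact disjoint_filter.2 fun w _ hiw hjw => hs.not_sconn i hi j hj hij (hiw.trans hjw.symm)

theorem exists_ne_of_sconn (hs : IsSCCSplit E E' s0 k r) {x y : V} (hxy : ¬ SConn E' x y)
    (hE : SConn E x y) :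
    ∃ i < k, ∃ j < k, i ≠ j ∧ SConn E' x (r i) ∧ SConn E' y (r j) := by
  have hx : SConn E x s0 := by
    by_contra hx
    exact hxy ((hs.sconn_iff_of_not_sconn x y hx).1 hE)
  obtain ⟨i, hi, hxi⟩ := (hs.sconn_iff x).1 hx
  obtain ⟨j, hj, hyj⟩ := (hs.sconn_iff y).1 (hE.symm.trans hx)
  refine ⟨i, hi, j, hj, ?_, hxi, hyj⟩
  rintro rfl
  exact hxy (hxi.trans hyj.symm)

theorem labelInterval_eq_of_not_sconn (hs : IsSCCSplit E E' s0 k r)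
    (hout : ∀ v, ¬ SConn E v s0 → π' v = π v) {v : V} (hv : ¬ SConn E v s0) :
    labelInterval E' π' v = labelInterval E π v := by
  have hclass : {w | SConn E' v w} = {w | SConn E v w} :=
    Set.ext fun w => (hs.sconn_iff_of_not_sconn v w hv).symm
  rw [labelInterval, labelInterval, hout v hv, hclass]

theorem fragments_partition [Fintype V] (hs : IsSCCSplit E E' s0 k r)
    (hfirst : π' (r 0) = π s0)
    (hrec : ∀ i, i + 1 < k → π' (r (i + 1)) = π' (r i) + Nat.card {w | SConn E' (r i) w}) :
    (∀ i < k, ∀ j < k, i ≠ j →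
      Disjoint (labelInterval E' π' (r i)) (labelInterval E' π' (r j))) ∧
    (range k).biUnion (fun i => labelInterval E' π' (r i)) = labelInterval E π s0 := by
  set b : ℕ → ℕ := fun i => π s0 + ∑ j ∈ range i, Nat.card {w | SConn E' (r j) w}
  have hb : Monotone b := fun i j hij =>
    Nat.add_le_add_left (sum_le_sum_of_subset (range_subset_range.2 hij)) _
  have hI : ∀ i < k, labelInterval E' π' (r i) = Ico (b i) (b (i + 1)) := by
    intro i hi
    simp only [labelInterval, relabel_eq_add_sum hfirst hrec hi, b, sum_range_succ, add_assoc]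
  refine ⟨fun i hi j hj hij => ?_, ?_⟩
  · rw [hI i hi, hI j hj]
    exact hb.disjoint_Ico_succ hij
  · rw [biUnion_congr rfl fun i hi => hI i (mem_range.1 hi), biUnion_range_Ico_of_monotone hb,
      labelInterval, hs.card_setOf_sconn_eq_sum]
    simp [b]

theorem labelInterval_subset [Fintype V] (hs : IsSCCSplit E E' s0 k r)
    (hconst : ∀ x y, SConn E x y → π x = π y) (hout : ∀ v, ¬ SConn E v s0 → π' v = π v)
    (hconst' : ∀ v w, SConn E' v w → π' v = π' w)
    (hfrag : (range k).biUnion (fun i => labelInterval E' π' (r i)) = labelInterval E π s0)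
    (v : V) : labelInterval E' π' v ⊆ labelInterval E π v := by
  by_cases hv : SConn E v s0
  · obtain ⟨i, hi, hvi⟩ := (hs.sconn_iff v).1 hv
    rw [labelInterval_congr hconst' hvi, labelInterval_congr hconst hv, ← hfrag]
    exact subset_biUnion_of_mem (fun i => labelInterval E' π' (r i)) (mem_range.2 hi)
  · exact (hs.labelInterval_eq_of_not_sconn hout hv).le

end IsSCCSplit

theorem IsTopologicalLabeling.of_isSCCSplit [Fintype V] (hπ : IsTopologicalLabeling E π n)
    (hs : IsSCCSplit E E' s0 k r) (hout : ∀ v, ¬ SConn E v s0 → π' v = π v)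
    (hconst' : ∀ v w, SConn E' v w → π' v = π' w) (hfirst : π' (r 0) = π s0)
    (hrec : ∀ i, i + 1 < k → π' (r (i + 1)) = π' (r i) + Nat.card {w | SConn E' (r i) w}) :
    IsTopologicalLabeling E' π' n := by
  obtain ⟨hfragDisj, hfrag⟩ := hs.fragments_partition hfirst hrec
  have hsub := hs.labelInterval_subset hπ.const hout hconst' hfrag
  refine ⟨hconst', fun x y hxy hreach => ?_, fun x y hxy => ?_, ?_⟩
  · by_cases hE : SConn E x y
    · obtain ⟨i, hi, j, hj, hij, hxi, hyj⟩ := hs.exists_ne_of_sconn hxy hE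
      have hlt : i < j := (lt_or_gt_of_ne hij).resolve_right fun hji =>
        hs.not_reach j hj i hi hji (hxi.2.trans (hreach.trans hyj.1))
      rw [hconst' _ _ hxi, hconst' _ _ hyj]
      exact relabel_lt hrec hlt hj
    · have hlt := hπ.lt_of_reach x y hE (.mono hs.le _ _ hreach)
      -- the new labels lie in the old intervals, which are disjoint and ordered by `π`
      calc π' x < π y := lt_of_mem_Ico_of_disjoint (hπ.disjoint x y hE) hlt
            (mem_Ico.1 (self_mem_labelInterval E π y)).2 (hsub x (self_mem_labelInterval E' π' x))
        _ ≤ π' y := (mem_Ico.1 (hsub y (self_mem_labelInterval E' π' y))).1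
  · by_cases hE : SConn E x y
    · obtain ⟨i, hi, j, hj, hij, hxi, hyj⟩ := hs.exists_ne_of_sconn hxy hE
      rw [labelInterval_congr hconst' hxi, labelInterval_congr hconst' hyj]
      exact hfragDisj i hi j hj hij
    · exact (hπ.disjoint x y hE).mono (hsub x) (hsub y)
  · refine le_antisymm ((biUnion_mono fun v _ => hsub v).trans hπ.biUnion_eq.le) ?_
    rw [← hπ.biUnion_eq]
    refine biUnion_subset.2 fun v _ => ?_
    by_cases hv : SConn E v s0
    · rw [labelInterval_congr hπ.const hv, ← hfrag]
      exact biUnion_subset.2 fun i _ => subset_biUnion_of_mem _ (mem_univ (r i))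
    · rw [← hs.labelInterval_eq_of_not_sconn hout hv]
      exact subset_biUnion_of_mem _ (mem_univ v)

end

theorem topological_labels_after_split_general
    {V : Type*} [Fintype V]
    (n : ℕ) (E E' : V → V → Prop) (da db : V)
    (hdel : ∀ x y, E' x y ↔ (E x y ∧ ¬(x = da ∧ y = db)))
    (π : V → ℕ)
    (hconst : ∀ x y, SConn E x y → π x = π y)
    (hmono : ∀ x y, ¬ SConn E x y → Relation.ReflTransGen E x y → π x < π y)
    (hdisj : ∀ x y, ¬ SConn E x y →
      Disjoint (Finset.Icc (π x) (π x + Nat.card {w | SConn E x w} - 1))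
               (Finset.Icc (π y) (π y + Nat.card {w | SConn E y w} - 1)))
    (hcover : Finset.univ.biUnion
        (fun v => Finset.Icc (π v) (π v + Nat.card {w | SConn E v w} - 1))
      = Finset.Icc 1 n)
    (s0 : V)
    (k : ℕ) (r : ℕ → V)
    (hrepr : ∀ v : V, SConn E v s0 ↔ ∃ i < k, SConn E' v (r i))
    (hrdist : ∀ i < k, ∀ j < k, i ≠ j → ¬ SConn E' (r i) (r j))
    (hsorted : ∀ i < k, ∀ j < k, i < j → ¬ Relation.ReflTransGen E' (r j) (r i))
    (hunchanged : ∀ v w : V, ¬ SConn E v s0 → (SConn E v w ↔ SConn E' v w))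
    (π' : V → ℕ)
    (hout : ∀ v, ¬ SConn E v s0 → π' v = π v)
    (hconst' : ∀ v w, SConn E' v w → π' v = π' w)
    (hfirst : π' (r 0) = π s0)
    (hrec : ∀ i, i + 1 < k → π' (r (i+1)) = π' (r i) + Nat.card {w | SConn E' (r i) w}) :
    ((∀ i < k, ∀ j < k, i ≠ j →
        Disjoint (Finset.Icc (π' (r i)) (π' (r i) + Nat.card {w | SConn E' (r i) w} - 1))
                 (Finset.Icc (π' (r j)) (π' (r j) + Nat.card {w | SConn E' (r j) w} - 1))) ∧
      (Finset.range k).biUnion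
          (fun i => Finset.Icc (π' (r i)) (π' (r i) + Nat.card {w | SConn E' (r i) w} - 1))
        = Finset.Icc (π s0) (π s0 + Nat.card {w | SConn E s0 w} - 1)) ∧
    ((∀ x y : V, ¬ SConn E' x y →
        Disjoint (Finset.Icc (π' x) (π' x + Nat.card {w | SConn E' x w} - 1))
                 (Finset.Icc (π' y) (π' y + Nat.card {w | SConn E' y w} - 1))) ∧
      Finset.univ.biUnion
          (fun v => Finset.Icc (π' v) (π' v + Nat.card {w | SConn E' v w} - 1))
        = Finset.Icc 1 n) ∧
    (∀ x y : V, ¬ SConn E' x y → Relation.ReflTransGen E' x y → π' x < π' y) := by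
  simp only [Icc_eq_labelInterval] at hdisj hcover ⊢
  have hπ : IsTopologicalLabeling E π n := ⟨hconst, hmono, hdisj, hcover⟩
  have hs : IsSCCSplit E E' s0 k r :=
    ⟨fun x y h => ((hdel x y).1 h).1, hrepr, hrdist, hsorted, hunchanged⟩
  have hπ' := hπ.of_isSCCSplit hs hout hconst' hfirst hrec
  exact ⟨hs.fragments_partition hfirst hrec, ⟨hπ'.disjoint, hπ'.biUnion_eq⟩, hπ'.lt_of_reach⟩

/-- maintaining topological labels under an edge deletion. A labeling
`π` is given per vertex (constant on SCCs), increasing along paths between distinct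
SCCs, and such that the intervals `[π v, π v + |SCC(v)| - 1]` partition `[1,n]`.
An edge `(da,db)` inside the SCC `S` of `s0` is deleted (all other SCCs unchanged);
`S` splits into the new SCCs of `r 0, …, r (k-1)`, topologically sorted. The new
labeling `π'` keeps labels outside `S`, is constant on new SCCs, and satisfies
`π' (r 0) = π s0` and `π' (r (i+1)) = π' (r i) + |SCC'(r i)|`. Then: the new intervals
of `S`'s fragments partition `S`'s old interval, all new intervals partition `[1,n]`,
and `π'` increases along every path between distinct new SCCs. -/
theorem topological_labels_after_split
    {V : Type*} [Fintype V]
    (n : ℕ) (E E' : V → V → Prop) (da db : V)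
    (hdel : ∀ x y, E' x y ↔ (E x y ∧ ¬(x = da ∧ y = db)))
    (π : V → ℕ)
    (hconst : ∀ x y, SConn E x y → π x = π y)
    (hmono : ∀ x y, ¬ SConn E x y → Relation.ReflTransGen E x y → π x < π y)
    (hdisj : ∀ x y, ¬ SConn E x y →
      Disjoint (Finset.Icc (π x) (π x + Nat.card {w | SConn E x w} - 1))
               (Finset.Icc (π y) (π y + Nat.card {w | SConn E y w} - 1)))
    (hcover : Finset.univ.biUnion
        (fun v => Finset.Icc (π v) (π v + Nat.card {w | SConn E v w} - 1))
      = Finset.Icc 1 n)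
    (s0 : V) (hda : SConn E da s0) (hdb : SConn E db s0)
    (k : ℕ) (hk : 1 ≤ k) (r : ℕ → V)
    (hrS : ∀ i < k, SConn E (r i) s0)
    (hrepr : ∀ v : V, SConn E v s0 ↔ ∃ i < k, SConn E' v (r i))
    (hrdist : ∀ i < k, ∀ j < k, i ≠ j → ¬ SConn E' (r i) (r j))
    (hsorted : ∀ i < k, ∀ j < k, i < j → ¬ Relation.ReflTransGen E' (r j) (r i))
    (hunchanged : ∀ v w : V, ¬ SConn E v s0 → (SConn E v w ↔ SConn E' v w))
    (π' : V → ℕ)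
    (hout : ∀ v, ¬ SConn E v s0 → π' v = π v)
    (hconst' : ∀ v w, SConn E' v w → π' v = π' w)
    (hfirst : π' (r 0) = π s0)
    (hrec : ∀ i, i + 1 < k → π' (r (i+1)) = π' (r i) + Nat.card {w | SConn E' (r i) w}) :
    ((∀ i < k, ∀ j < k, i ≠ j →
        Disjoint (Finset.Icc (π' (r i)) (π' (r i) + Nat.card {w | SConn E' (r i) w} - 1))
                 (Finset.Icc (π' (r j)) (π' (r j) + Nat.card {w | SConn E' (r j) w} - 1))) ∧
      (Finset.range k).biUnion
          (fun i => Finset.Icc (π' (r i)) (π' (r i) + Nat.card {w | SConn E' (r i) w} - 1))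
        = Finset.Icc (π s0) (π s0 + Nat.card {w | SConn E s0 w} - 1)) ∧
    ((∀ x y : V, ¬ SConn E' x y →
        Disjoint (Finset.Icc (π' x) (π' x + Nat.card {w | SConn E' x w} - 1))
                 (Finset.Icc (π' y) (π' y + Nat.card {w | SConn E' y w} - 1))) ∧
      Finset.univ.biUnion
          (fun v => Finset.Icc (π' v) (π' v + Nat.card {w | SConn E' v w} - 1))
        = Finset.Icc 1 n) ∧
    (∀ x y : V, ¬ SConn E' x y → Relation.ReflTransGen E' x y → π' x < π' y) :=
  topological_labels_after_split_general n E E' da db hdel π hconst hmono hdisj hcover s0 k r hrepr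
    hrdist hsorted hunchanged π' hout hconst' hfirst hrec
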